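/- arXiv:1202.0322 — 2 statements merged into one kernel-verified Lean document; each statement's English description precedes it below -/
import Mathlib

section
/- Let P^{AE} be a sub-distribution on A × E, Q a normalized distribution on E with Q(e) > 0 for all e, and B a finite set with |B| = M. Let (f_x : A → B)_{x∈X} be a universal₂ ensemble over a finite probability space (X,w), i.e. Pr_X[f_X(a₁) = f_X(a₂)] ≤ 1/M for all a₁ ≠ a₂ in A. Then E_X [ d₁'(f_X(A)|E|P^{AE}) ] ≤ M^{1/2} · ( Σ_{a,e} P^{AE}(a,e)²·Q(e)^{-1} )^{1/2} = M^{1/2}·e^{−H₂(A|E|P^{AE}‖Q)/2}. Moreover, if P^{AE} is normalized with P^E(e) > 0 for all e, then E_X [ I'(f_X(A)|E|P^{AE}) ] ≤ log( 1 + M·e^{−H₂(A|E|P^{AE}‖P^E)} ) ≤ M·e^{−H₂(A|E|P^{AE}‖P^E)}. -/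
/-!
Expanding the square, `E_X Σ_b P^{f_X(A),E}(b,e)² ≤ Σ_a P(a,e)² + P^E(e)²/M`: the diagonal
`a₁ = a₂` contributes `Σ_a P(a,e)²`, and by universality₂ every pair `a₁ ≠ a₂` collides with
probability at most `1/M`.

For `d₁'`, Cauchy–Schwarz against the weights `Q(e)` (which sum to `M` over `B × E`) bounds the
`L¹` distance by `√M` times a `Q`-weighted `L²` distance from the average `P^E(e)/M`; concavity of
`√` moves `E_X` inside, and after centering, the collision estimate bounds the expected squared
distance by `Σ P(a,e)²/Q(e)`.

For `I'`, Jensen's inequality for `log` with weights `w(x) P^{f_x(A),E}(b,e)` bounds `E_X I'` by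
`log (M · E_X Σ_{b,e} P^{f_X(A),E}(b,e)² / P^E(e))`, which the collision estimate bounds by
`log (1 + M e^{-H₂})`; finally `log (1 + y) ≤ y`.
-/

open scoped BigOperators

open Classical in
/-- Probability of the event `p` with respect to the weight `w` on a finite index set. -/
noncomputable def prOf {X : Type*} [Fintype X] (w : X → ℝ) (p : X → Prop) : ℝ :=
  ∑ x, if p x then w x else 0

open Classical in
/-- Pushforward `P^{f(A),E}(b,e) = Σ_{a : f(a)=b} P^{AE}(a,e)`. -/
noncomputable def push {A B E : Type*} [Fintype A] (f : A → B) (P : A × E → ℝ)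
    (b : B) (e : E) : ℝ :=
  ∑ a, if f a = b then P (a, e) else 0

open Finset Real

section Weights

variable {X : Type*} [Fintype X]

lemma prOf_le_one {w : X → ℝ} (hw0 : ∀ x, 0 ≤ w x) (hw1 : ∑ x, w x = 1) (p : X → Prop) :
    prOf w p ≤ 1 := by
  classical
  rw [prOf, ← hw1]
  gcongr with x
  split_ifs <;> simp [hw0 x]

lemma sum_mul_sqrt_le_sqrt_sum_mul {w y : X → ℝ} (hw0 : ∀ x, 0 ≤ w x) (hw1 : ∑ x, w x = 1)
    (hy : ∀ x, 0 ≤ y x) : ∑ x, w x * √(y x) ≤ √(∑ x, w x * y x) :=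
  strictConcaveOn_sqrt.concaveOn.le_map_sum (fun x _ => hw0 x) hw1 (fun x _ => hy x)

lemma sum_mul_log_le_log_of_sum_mul_le {w y : X → ℝ} (hw0 : ∀ x, 0 ≤ w x)
    (hw1 : ∑ x, w x = 1) (hy : ∀ x, 0 < w x → 0 < y x) {c : ℝ} (hc : ∑ x, w x * y x ≤ c) :
    ∑ x, w x * log (y x) ≤ log c := by
  classical
  have hsupp : ∀ {g : X → ℝ}, ∑ x with 0 < w x, w x * g x = ∑ x, w x * g x := fun {g} =>
    sum_filter_of_ne fun x _ hx => (hw0 x).lt_of_ne' (left_ne_zero_of_mul hx)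
  have hw1' : ∑ x with 0 < w x, w x = 1 := by simpa [hw1] using hsupp (g := fun _ => 1)
  have hpos : 0 < ∑ x with 0 < w x, w x * y x := by
    refine sum_pos (fun x hx => ?_) (nonempty_of_sum_ne_zero (hw1' ▸ one_ne_zero))
    have hx := (mem_filter.1 hx).2
    exact mul_pos hx (hy x hx)
  rw [← hsupp] at hc ⊢
  calc _ ≤ log (∑ x with 0 < w x, w x * y x) :=
        strictConcaveOn_log_Ioi.concaveOn.le_map_sum (fun x _ => hw0 x) hw1'
          fun x hx => hy x (mem_filter.1 hx).2
    _ ≤ log c := log_le_log hpos hc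

end Weights

lemma sum_sq_sub_average {B : Type*} [Fintype B] [Nonempty B] (y : B → ℝ) :
    ∑ b, (y b - (∑ b', y b') / Fintype.card B) ^ 2 =
      ∑ b, y b ^ 2 - (∑ b, y b) ^ 2 / Fintype.card B := by
  have hM : (Fintype.card B : ℝ) ≠ 0 := Nat.cast_ne_zero.2 Fintype.card_ne_zero
  simp only [sub_sq, sum_add_distrib, sum_sub_distrib, ← sum_mul, ← mul_sum, sum_const,
    card_univ, nsmul_eq_mul]
  field_simp
  ring

section Pushforward

variable {A B E : Type*} [Fintype A]

lemma push_nonneg {P : A × E → ℝ} (hP0 : ∀ x, 0 ≤ P x) (f : A → B) (b : B) (e : E) :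
    0 ≤ push f P b e := by
  classical
  exact sum_nonneg fun a _ => by split_ifs <;> simp [hP0 (a, e)]

variable [Fintype B]

lemma sum_push (f : A → B) (P : A × E → ℝ) (e : E) : ∑ b, push f P b e = ∑ a, P (a, e) := by
  classical
  unfold push
  rw [sum_comm]
  simp

variable {X : Type*} [Fintype X]

lemma sum_mul_sum_push_sq (w : X → ℝ) (f : X → A → B) (P : A × E → ℝ) (e : E) :
    ∑ x, w x * ∑ b, push (f x) P b e ^ 2 =
      ∑ a₁, ∑ a₂, P (a₁, e) * P (a₂, e) * prOf w (fun x => f x a₁ = f x a₂) := by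
  classical
  have hfiber : ∀ x, ∑ b, push (f x) P b e ^ 2 =
      ∑ a₁, ∑ a₂, if f x a₁ = f x a₂ then P (a₁, e) * P (a₂, e) else 0 := by
    intro x
    simp only [push, sq, sum_mul_sum]
    rw [sum_comm]
    refine sum_congr rfl fun a₁ _ => ?_
    rw [sum_comm]
    refine sum_congr rfl fun a₂ _ => ?_
    simp [ite_mul, mul_ite, eq_comm]
  simp only [hfiber, prOf, mul_sum, mul_ite, mul_zero]
  rw [sum_comm]
  refine sum_congr rfl fun a₁ _ => ?_
  rw [sum_comm]
  exact sum_congr rfl fun a₂ _ => sum_congr rfl fun x _ => by split_ifs <;> ring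

variable (w : X → ℝ) (f : X → A → B) in
def IsUniversal₂ : Prop :=
  ∀ a₁ a₂ : A, a₁ ≠ a₂ → prOf w (fun x => f x a₁ = f x a₂) ≤ (Fintype.card B : ℝ)⁻¹

lemma sum_mul_sum_push_sq_le {P : A × E → ℝ} (hP0 : ∀ x, 0 ≤ P x) {w : X → ℝ}
    (hw0 : ∀ x, 0 ≤ w x) (hw1 : ∑ x, w x = 1) {f : X → A → B} (huniv : IsUniversal₂ w f)
    (e : E) :
    ∑ x, w x * ∑ b, push (f x) P b e ^ 2 ≤
      ∑ a, P (a, e) ^ 2 + (∑ a, P (a, e)) ^ 2 / Fintype.card B := by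
  classical
  have hterm : ∀ a₁ a₂, P (a₁, e) * P (a₂, e) * prOf w (fun x => f x a₁ = f x a₂) ≤
      (if a₁ = a₂ then P (a₁, e) ^ 2 else 0) + P (a₁, e) * P (a₂, e) / Fintype.card B := by
    intro a₁ a₂
    have hPP : 0 ≤ P (a₁, e) * P (a₂, e) := mul_nonneg (hP0 _) (hP0 _)
    by_cases h : a₁ = a₂
    · subst h
      rw [if_pos rfl, sq]
      calc _ ≤ P (a₁, e) * P (a₁, e) * 1 := mul_le_mul_of_nonneg_left (prOf_le_one hw0 hw1 _) hPP
        _ ≤ _ := by rw [mul_one]; exact le_add_of_nonneg_right (by positivity)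
    · rw [if_neg h, zero_add, div_eq_mul_inv]
      exact mul_le_mul_of_nonneg_left (huniv a₁ a₂ h) hPP
  rw [sum_mul_sum_push_sq]
  calc _ ≤ ∑ a₁, ∑ a₂, ((if a₁ = a₂ then P (a₁, e) ^ 2 else 0) +
          P (a₁, e) * P (a₂, e) / Fintype.card B) := by
        gcongr with a₁ _ a₂ _
        exact hterm a₁ a₂
    _ = _ := by simp [sum_add_distrib, sq, sum_mul_sum, sum_div]

end Pushforward

section Secrecy

variable {A B E : Type*} [Fintype A] [Fintype B] [Fintype E]

-- `d₁'(f(A)|E|P)`, `I'(f(A)|E|P)` and `exp (-H₂(A|E|P‖Q))` in the notation of the paper.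
noncomputable def l1DistFromUniform (f : A → B) (P : A × E → ℝ) : ℝ :=
  ∑ b, ∑ e, |push f P b e - (∑ a, P (a, e)) / Fintype.card B|

noncomputable def modifiedMutualInfo (f : A → B) (P : A × E → ℝ) : ℝ :=
  ∑ b, ∑ e, push f P b e * log (Fintype.card B * push f P b e / ∑ a, P (a, e))

noncomputable def condCollision (P : A × E → ℝ) (Q : E → ℝ) : ℝ :=
  ∑ a, ∑ e, P (a, e) ^ 2 * (Q e)⁻¹

lemma condCollision_nonneg (P : A × E → ℝ) {Q : E → ℝ} (hQ0 : ∀ e, 0 ≤ Q e) :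
    0 ≤ condCollision P Q :=
  sum_nonneg fun _ _ => sum_nonneg fun e _ => mul_nonneg (sq_nonneg _) (inv_nonneg.2 (hQ0 e))

lemma sum_abs_le_sqrt_card_mul_sqrt [Nonempty B] {Q : E → ℝ} (hQ0 : ∀ e, 0 < Q e)
    (hQ1 : ∑ e, Q e = 1) (δ : B → E → ℝ) :
    ∑ b, ∑ e, |δ b e| ≤ √(Fintype.card B) * √(∑ b, ∑ e, δ b e ^ 2 * (Q e)⁻¹) := by
  have hM : (0 : ℝ) < Fintype.card B := Nat.cast_pos.2 Fintype.card_pos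
  have hCS := sq_sum_div_le_sum_sq_div univ (fun i : B × E => |δ i.1 i.2|)
    (g := fun i => Q i.2) fun i _ => hQ0 i.2
  simp only [Fintype.sum_prod_type, hQ1, sum_const, card_univ, nsmul_eq_mul, mul_one, sq_abs,
    div_eq_mul_inv] at hCS
  rw [← sqrt_mul hM.le]
  refine le_sqrt_of_sq_le ?_
  rwa [← div_le_iff₀' hM, div_eq_mul_inv]

variable {X : Type*} [Fintype X] {P : A × E → ℝ} {w : X → ℝ} {f : X → A → B}

lemma sum_mul_condCollision_push_le (hP0 : ∀ x, 0 ≤ P x) (hw0 : ∀ x, 0 ≤ w x)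
    (hw1 : ∑ x, w x = 1) (huniv : IsUniversal₂ w f) {Q : E → ℝ} (hQ0 : ∀ e, 0 ≤ Q e) :
    ∑ x, w x * condCollision (fun i => push (f x) P i.1 i.2) Q ≤
      condCollision P Q + (∑ e, (∑ a, P (a, e)) ^ 2 * (Q e)⁻¹) / Fintype.card B := by
  have hswap : ∀ x, w x * condCollision (fun i => push (f x) P i.1 i.2) Q =
      ∑ e, (Q e)⁻¹ * (w x * ∑ b, push (f x) P b e ^ 2) := by
    intro x
    rw [condCollision, sum_comm, mul_sum]
    refine sum_congr rfl fun e _ => ?_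
    rw [mul_sum, mul_sum, mul_sum]
    exact sum_congr rfl fun b _ => by ring
  calc _ = ∑ e, (Q e)⁻¹ * ∑ x, w x * ∑ b, push (f x) P b e ^ 2 := by
        simp only [hswap, mul_sum (s := univ (α := X))]
        exact sum_comm
    _ ≤ ∑ e, (Q e)⁻¹ * (∑ a, P (a, e) ^ 2 + (∑ a, P (a, e)) ^ 2 / Fintype.card B) := by
        gcongr with e
        · exact inv_nonneg.2 (hQ0 e)
        · exact sum_mul_sum_push_sq_le hP0 hw0 hw1 huniv e
    _ = _ := by
        rw [condCollision, sum_comm (γ := A), sum_div, ← sum_add_distrib]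
        refine sum_congr rfl fun e _ => ?_
        rw [← sum_mul]
        ring

lemma sum_mul_sum_sq_push_sub_le [Nonempty B] (hP0 : ∀ x, 0 ≤ P x) (hw0 : ∀ x, 0 ≤ w x)
    (hw1 : ∑ x, w x = 1) (huniv : IsUniversal₂ w f) {Q : E → ℝ} (hQ0 : ∀ e, 0 ≤ Q e) :
    ∑ x, w x * ∑ b, ∑ e, (push (f x) P b e - (∑ a, P (a, e)) / Fintype.card B) ^ 2 * (Q e)⁻¹ ≤
      condCollision P Q := by
  have hcentre : ∀ x, ∑ b, ∑ e,
      (push (f x) P b e - (∑ a, P (a, e)) / Fintype.card B) ^ 2 * (Q e)⁻¹ =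
      condCollision (fun i => push (f x) P i.1 i.2) Q -
        (∑ e, (∑ a, P (a, e)) ^ 2 * (Q e)⁻¹) / Fintype.card B := by
    intro x
    rw [condCollision, sum_comm, sum_comm (γ := B), sum_div, ← sum_sub_distrib]
    refine sum_congr rfl fun e _ => ?_
    rw [← sum_mul, ← sum_mul, ← sum_push (f x) P e, sum_sq_sub_average]
    ring
  simp only [hcentre, mul_sub, sum_sub_distrib, ← sum_mul, hw1, one_mul]
  linarith [sum_mul_condCollision_push_le hP0 hw0 hw1 huniv hQ0]

theorem sum_mul_l1DistFromUniform_le [Nonempty B] (hP0 : ∀ x, 0 ≤ P x) (hw0 : ∀ x, 0 ≤ w x)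
    (hw1 : ∑ x, w x = 1) (huniv : IsUniversal₂ w f) {Q : E → ℝ} (hQ0 : ∀ e, 0 < Q e)
    (hQ1 : ∑ e, Q e = 1) :
    ∑ x, w x * l1DistFromUniform (f x) P ≤ √(Fintype.card B) * √(condCollision P Q) := by
  set Y : X → ℝ := fun x =>
    ∑ b, ∑ e, (push (f x) P b e - (∑ a, P (a, e)) / Fintype.card B) ^ 2 * (Q e)⁻¹
  have hY0 : ∀ x, 0 ≤ Y x := fun x =>
    sum_nonneg fun b _ => sum_nonneg fun e _ => mul_nonneg (sq_nonneg _) (inv_nonneg.2 (hQ0 e).le)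
  calc ∑ x, w x * l1DistFromUniform (f x) P ≤ ∑ x, w x * (√(Fintype.card B) * √(Y x)) := by
        gcongr with x
        · exact hw0 x
        · exact sum_abs_le_sqrt_card_mul_sqrt hQ0 hQ1 _
    _ = √(Fintype.card B) * ∑ x, w x * √(Y x) := by
        rw [mul_sum]
        exact sum_congr rfl fun x _ => by ring
    _ ≤ √(Fintype.card B) * √(∑ x, w x * Y x) := by
        gcongr
        exact sum_mul_sqrt_le_sqrt_sum_mul hw0 hw1 hY0
    _ ≤ √(Fintype.card B) * √(condCollision P Q) := by
        gcongr
        exact sum_mul_sum_sq_push_sub_le hP0 hw0 hw1 huniv fun e => (hQ0 e).le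

theorem sum_mul_modifiedMutualInfo_le [Nonempty B] (hP0 : ∀ x, 0 ≤ P x) (hP1 : ∑ x, P x = 1)
    (hPE : ∀ e, 0 < ∑ a, P (a, e)) (hw0 : ∀ x, 0 ≤ w x) (hw1 : ∑ x, w x = 1)
    (huniv : IsUniversal₂ w f) :
    ∑ x, w x * modifiedMutualInfo (f x) P ≤
      log (1 + Fintype.card B * condCollision P fun e => ∑ a, P (a, e)) := by
  have hM : (0 : ℝ) < Fintype.card B := Nat.cast_pos.2 Fintype.card_pos
  set q : X × B × E → ℝ := fun i => w i.1 * push (f i.1) P i.2.1 i.2.2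
  set t : X × B × E → ℝ := fun i => Fintype.card B * push (f i.1) P i.2.1 i.2.2 / ∑ a, P (a, i.2.2)
  have hq0 : ∀ i, 0 ≤ q i := fun i => mul_nonneg (hw0 _) (push_nonneg hP0 _ _ _)
  have hqt : ∀ i, 0 < q i → 0 < t i := fun i hi =>
    div_pos (mul_pos hM (pos_of_mul_pos_right hi (hw0 _))) (hPE _)
  have hq1 : ∑ i, q i = 1 := by
    have hmass : ∀ x, ∑ b, ∑ e, push (f x) P b e = 1 := fun x => by
      rw [sum_comm, ← hP1, Fintype.sum_prod_type_right]
      exact sum_congr rfl fun e _ => sum_push (f x) P e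
    simp only [q, Fintype.sum_prod_type, ← mul_sum, hmass, mul_one, hw1]
  have hlhs : ∑ i, q i * log (t i) = ∑ x, w x * modifiedMutualInfo (f x) P := by
    simp only [q, t, modifiedMutualInfo, Fintype.sum_prod_type, mul_sum, mul_assoc]
  have hrhs : ∑ i, q i * t i = Fintype.card B *
      ∑ x, w x * condCollision (fun i => push (f x) P i.1 i.2) fun e => ∑ a, P (a, e) := by
    simp only [q, t, condCollision, Fintype.sum_prod_type, mul_sum]
    exact sum_congr rfl fun x _ => sum_congr rfl fun b _ => sum_congr rfl fun e _ => by ring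
  have hmarg : ∑ e, (∑ a, P (a, e)) ^ 2 * (∑ a, P (a, e))⁻¹ = 1 := by
    rw [← hP1, Fintype.sum_prod_type_right]
    exact sum_congr rfl fun e _ => by field_simp [(hPE e).ne']
  have hcoll := sum_mul_condCollision_push_le hP0 hw0 hw1 huniv fun e => (hPE e).le
  rw [hmarg] at hcoll
  rw [← hlhs]
  refine sum_mul_log_le_log_of_sum_mul_le hq0 hq1 hqt ?_
  rw [hrhs]
  have := mul_le_mul_of_nonneg_left hcoll hM.le
  rw [mul_add, mul_one_div_cancel hM.ne'] at this
  linarith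

end Secrecy

theorem stmt_11_general {A B E : Type*} [Fintype A] [Fintype B] [Nonempty B]
    [Fintype E]
    (P : A × E → ℝ) (hP0 : ∀ x, 0 ≤ P x)
    (Q : E → ℝ) (hQ0 : ∀ e, 0 < Q e) (hQ1 : ∑ e, Q e = 1)
    {X : Type*} [Fintype X] (w : X → ℝ)
    (hw0 : ∀ x, 0 ≤ w x) (hw1 : ∑ x, w x = 1)
    (f : X → A → B)
    (huniv : ∀ a₁ a₂ : A, a₁ ≠ a₂ →
      prOf w (fun x => f x a₁ = f x a₂) ≤ (Fintype.card B : ℝ)⁻¹) :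
    (∑ x, w x *
        ∑ b : B, ∑ e : E, |push (f x) P b e - (∑ a, P (a, e)) / (Fintype.card B : ℝ)| ≤
      Real.sqrt (Fintype.card B : ℝ) *
        Real.sqrt (∑ a : A, ∑ e : E, P (a, e) ^ 2 * (Q e)⁻¹)) ∧
    ((∑ x, P x) = 1 → (∀ e : E, 0 < ∑ a, P (a, e)) →
      (∑ x, w x *
          ∑ b : B, ∑ e : E, push (f x) P b e *
            Real.log ((Fintype.card B : ℝ) * push (f x) P b e / (∑ a, P (a, e))) ≤
        Real.log (1 + (Fintype.card B : ℝ) *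
          ∑ a : A, ∑ e : E, P (a, e) ^ 2 * (∑ a', P (a', e))⁻¹)) ∧
      (Real.log (1 + (Fintype.card B : ℝ) *
          ∑ a : A, ∑ e : E, P (a, e) ^ 2 * (∑ a', P (a', e))⁻¹) ≤
        (Fintype.card B : ℝ) *
          ∑ a : A, ∑ e : E, P (a, e) ^ 2 * (∑ a', P (a', e))⁻¹)) := by
  refine ⟨sum_mul_l1DistFromUniform_le hP0 hw0 hw1 huniv hQ0 hQ1, fun hP1 hPE =>
    ⟨sum_mul_modifiedMutualInfo_le hP0 hP1 hPE hw0 hw1 huniv, ?_⟩⟩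
  have hMC : 0 ≤ (Fintype.card B : ℝ) * condCollision P fun e => ∑ a, P (a, e) :=
    mul_nonneg (Nat.cast_nonneg _) (condCollision_nonneg P fun e => (hPE e).le)
  refine (log_le_sub_one_of_pos ?_).trans_eq (add_sub_cancel_left _ _)
  exact add_pos_of_pos_of_nonneg one_pos hMC

theorem stmt_11 {A B E : Type*} [Fintype A] [Nonempty A] [Fintype B] [Nonempty B]
    [Fintype E] [Nonempty E]
    (P : A × E → ℝ) (hP0 : ∀ x, 0 ≤ P x) (hP1 : ∑ x, P x ≤ 1)
    (Q : E → ℝ) (hQ0 : ∀ e, 0 < Q e) (hQ1 : ∑ e, Q e = 1)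
    {X : Type*} [Fintype X] [Nonempty X] (w : X → ℝ)
    (hw0 : ∀ x, 0 ≤ w x) (hw1 : ∑ x, w x = 1)
    (f : X → A → B)
    (huniv : ∀ a₁ a₂ : A, a₁ ≠ a₂ →
      prOf w (fun x => f x a₁ = f x a₂) ≤ (Fintype.card B : ℝ)⁻¹) :
    (∑ x, w x *
        ∑ b : B, ∑ e : E, |push (f x) P b e - (∑ a, P (a, e)) / (Fintype.card B : ℝ)| ≤
      Real.sqrt (Fintype.card B : ℝ) *
        Real.sqrt (∑ a : A, ∑ e : E, P (a, e) ^ 2 * (Q e)⁻¹)) ∧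
    ((∑ x, P x) = 1 → (∀ e : E, 0 < ∑ a, P (a, e)) →
      (∑ x, w x *
          ∑ b : B, ∑ e : E, push (f x) P b e *
            Real.log ((Fintype.card B : ℝ) * push (f x) P b e / (∑ a, P (a, e))) ≤
        Real.log (1 + (Fintype.card B : ℝ) *
          ∑ a : A, ∑ e : E, P (a, e) ^ 2 * (∑ a', P (a', e))⁻¹)) ∧
      (Real.log (1 + (Fintype.card B : ℝ) *
          ∑ a : A, ∑ e : E, P (a, e) ^ 2 * (∑ a', P (a', e))⁻¹) ≤
        (Fintype.card B : ℝ) *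
          ∑ a : A, ∑ e : E, P (a, e) ^ 2 * (∑ a', P (a', e))⁻¹)) :=
  stmt_11_general P hP0 Q hQ0 hQ1 w hw0 hw1 f huniv
end

section
/- Let 𝔽_q be a finite field with q elements, n ≥ m ≥ 1, E a finite nonempty set, and P^{AE} a sub-distribution on 𝔽_q^n × E. Let (f_x : 𝔽_q^n → 𝔽_q^m)_{x∈X} be an ensemble of surjective linear maps over a finite probability space (X,w) that is ε-almost dual universal₂: Pr_X[ y ∈ (ker f_X)^⊥ ] ≤ ε·q^{m−n} for every nonzero y. Set M := q^m. Then for every s ∈ (0, 1/2], E_X [ d₁'(f_X(A)|E|P^{AE}) ] ≤ (2 + √ε) · M^s · Σ_{e∈E} ( Σ_{a∈𝔽_q^n} P^{AE}(a,e)^{1/(1-s)} )^{1-s} = (2+√ε)·M^s·e^{φ(s|A|E|P^{AE})}. -/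
open scoped BigOperators

/-!
Fix `e` and put `R = P(·, e)`, `K = Σ_a R(a)^{1/(1-s)}`. Truncate `R` at the level
`c = (K/M)^{1-s}`. The part of `R` above `c` moves the L¹ distance by at most twice its mass,
which is at most `M c = M^s K^{1-s}`. For the truncated part, Cauchy–Schwarz and Jensen bound the
expected L¹ distance by the square root of `M` times the expected squared L² distance. By Fourier
analysis on `𝔽_q^n`, for a fixed `f` the squared L² distance times `M` is at most the sum of
`|R̂(y)|²` over the nonzero `y ∈ (ker f)^⊥`, because the transpose of a surjective `f` maps
`𝔽_q^m ∖ 0` injectively into that set. Averaging over `X`, dual universality and Parseval bound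
this by `M ε Σ_a min(R(a), c)² ≤ ε (M c)²`.
-/

section DualUniversalHashing

open Finset Matrix

-- `push f P · e` is `fiberSum f (P (·, e))` by definition.
open Classical in
noncomputable def fiberSum {α β : Type*} [Fintype α] (g : α → β) (R : α → ℝ) (b : β) : ℝ :=
  ∑ a, if g a = b then R a else 0

section fiberSum

variable {α β : Type*} [Fintype α]

theorem fiberSum_add (g : α → β) (R R' : α → ℝ) (b : β) :
    fiberSum g (R + R') b = fiberSum g R b + fiberSum g R' b := by
  simp only [fiberSum, Pi.add_apply, ← sum_add_distrib]
  exact sum_congr rfl fun a _ => by split_ifs <;> simp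

theorem fiberSum_nonneg {R : α → ℝ} (hR : 0 ≤ R) (g : α → β) (b : β) : 0 ≤ fiberSum g R b :=
  sum_nonneg fun a _ => by split_ifs; exacts [hR a, le_rfl]

theorem fiberSum_id (R : α → ℝ) (a : α) : fiberSum id R a = R a := by
  classical
  simp [fiberSum]

theorem sum_fiberSum [Fintype β] (g : α → β) (R : α → ℝ) : ∑ b, fiberSum g R b = ∑ a, R a := by
  classical
  unfold fiberSum
  rw [sum_comm]
  simp

theorem sum_fiberSum_sq [Fintype β] [DecidableEq β] (g : α → β) (R : α → ℝ) :
    ∑ b, fiberSum g R b ^ 2 = ∑ a, ∑ a', if g a = g a' then R a * R a' else 0 := by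
  simp only [fiberSum, sq, sum_mul_sum, ite_mul, mul_ite, zero_mul, mul_zero]
  rw [sum_comm]
  refine sum_congr rfl fun a _ => ?_
  rw [sum_comm]
  refine sum_congr rfl fun a' _ => ?_
  by_cases h : g a = g a' <;> simp [h, eq_comm]

theorem sum_abs_fiberSum_sub_le [Fintype β] [Nonempty β]
    {R₁ R : α → ℝ} (h : R₁ ≤ R) (g : α → β) :
    ∑ b, |fiberSum g R b - (∑ a, R a) / Fintype.card β| ≤
      ∑ b, |fiberSum g R₁ b - (∑ a, R₁ a) / Fintype.card β| + 2 * ∑ a, (R a - R₁ a) := by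
  set M : ℝ := (Fintype.card β : ℝ)
  have hM : 0 < M := by positivity
  have hR₂ : 0 ≤ R - R₁ := sub_nonneg.mpr h
  have hpt (b : β) : |fiberSum g R b - (∑ a, R a) / M| ≤
      |fiberSum g R₁ b - (∑ a, R₁ a) / M| + (fiberSum g (R - R₁) b + (∑ a, (R - R₁) a) / M) := by
    have hsplit : fiberSum g R b = fiberSum g R₁ b + fiberSum g (R - R₁) b := by
      rw [← fiberSum_add, add_sub_cancel]
    have h₁ := fiberSum_nonneg hR₂ g b
    have h₂ : 0 ≤ (∑ a, (R - R₁) a) / M := div_nonneg (sum_nonneg fun a _ => hR₂ a) hM.le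
    have hsum : ∑ a, R a = ∑ a, R₁ a + ∑ a, (R - R₁) a := by
      rw [← sum_add_distrib]; exact sum_congr rfl fun a _ => by simp
    rw [hsplit, hsum, add_div, add_sub_add_comm]
    refine (abs_add_le _ _).trans ?_
    gcongr
    exact abs_sub_le_iff.mpr ⟨by linarith, by linarith⟩
  calc _ ≤ ∑ b, (|fiberSum g R₁ b - (∑ a, R₁ a) / M| +
        (fiberSum g (R - R₁) b + (∑ a, (R - R₁) a) / M)) := sum_le_sum fun b _ => hpt b
    _ = _ := by
        rw [sum_add_distrib, sum_add_distrib, sum_fiberSum, sum_const, card_univ, nsmul_eq_mul,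
          mul_div_cancel₀ _ hM.ne']
        simp only [Pi.sub_apply]
        ring

end fiberSum

theorem sum_mul_sum_abs_le_sqrt {X B : Type*} [Fintype X] [Fintype B] {w : X → ℝ}
    (hw0 : ∀ x, 0 ≤ w x) (hw1 : ∑ x, w x = 1) (d : X → B → ℝ) :
    ∑ x, w x * ∑ b, |d x b| ≤ √(Fintype.card B * ∑ x, w x * ∑ b, d x b ^ 2) := by
  have hcs (x : X) : ∑ b, |d x b| ≤ √(Fintype.card B * ∑ b, d x b ^ 2) := by
    refine Real.le_sqrt_of_sq_le ?_
    simpa [sq_abs] using sq_sum_le_card_mul_sum_sq (s := univ) (f := fun b => |d x b|)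
  calc ∑ x, w x * ∑ b, |d x b| ≤ ∑ x, w x * √(Fintype.card B * ∑ b, d x b ^ 2) :=
        sum_le_sum fun x _ => mul_le_mul_of_nonneg_left (hcs x) (hw0 x)
    _ ≤ √(∑ x, w x * (Fintype.card B * ∑ b, d x b ^ 2)) :=
        Real.strictConcaveOn_sqrt.concaveOn.le_map_sum (fun x _ => hw0 x) hw1
          fun x _ => Set.mem_Ici.mpr (by positivity)
    _ = √(Fintype.card B * ∑ x, w x * ∑ b, d x b ^ 2) := by
        rw [mul_sum]; exact congrArg _ (sum_congr rfl fun x _ => by ring)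

theorem Real.rpow_mul_sub_min_le {x c r : ℝ} (hx : 0 ≤ x) (hc : 0 < c) (hr : 1 ≤ r) :
    c ^ r * (x - min x c) ≤ c * x ^ r := by
  rcases le_total x c with hxc | hcx
  · rw [min_eq_left hxc, sub_self, mul_zero]
    positivity
  · rw [min_eq_right hcx]
    have hx0 : x ≠ 0 := (hc.trans_le hcx).ne'
    have hcx' : c ^ (r - 1) ≤ x ^ (r - 1) := Real.rpow_le_rpow hc.le hcx (by linarith)
    calc c ^ r * (x - c) ≤ c ^ r * x := by nlinarith [Real.rpow_pos_of_pos hc r]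
      _ = c * (c ^ (r - 1) * x) := by rw [Real.rpow_sub_one hc.ne']; field_simp
      _ ≤ c * (x ^ (r - 1) * x) := by gcongr
      _ = c * x ^ r := by rw [Real.rpow_sub_one hx0]; field_simp

theorem Real.rpow_mul_min_sq_le {x c r : ℝ} (hx : 0 ≤ x) (hc : 0 ≤ c) (hr0 : 0 ≤ r)
    (hr2 : r ≤ 2) : c ^ r * min x c ^ 2 ≤ c ^ 2 * x ^ r := by
  rcases le_total x c with hxc | hcx
  · have hsplit {t : ℝ} (ht : 0 ≤ t) : t ^ 2 = t ^ r * t ^ (2 - r) := by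
      rw [← Real.rpow_add' ht (by norm_num), add_sub_cancel, Real.rpow_two]
    rw [min_eq_left hxc, hsplit hx, hsplit hc]
    have : x ^ (2 - r) ≤ c ^ (2 - r) := Real.rpow_le_rpow hx hxc (by linarith)
    calc c ^ r * (x ^ r * x ^ (2 - r)) ≤ c ^ r * (x ^ r * c ^ (2 - r)) := by gcongr
      _ = _ := by ring
  · rw [min_eq_right hcx, mul_comm]
    gcongr

theorem sum_sub_min_le_of_mul_rpow_eq {α : Type*} [Fintype α] {R : α → ℝ} (hR : 0 ≤ R)
    {M c r : ℝ} (hc : 0 < c) (hr : 1 ≤ r) (hcr : M * c ^ r = ∑ a, R a ^ r) :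
    ∑ a, (R a - min (R a) c) ≤ M * c := by
  have hcr0 : 0 < c ^ r := Real.rpow_pos_of_pos hc r
  refine le_of_mul_le_mul_left ?_ hcr0
  calc c ^ r * ∑ a, (R a - min (R a) c) ≤ c * ∑ a, R a ^ r := by
        rw [mul_sum, mul_sum]
        exact sum_le_sum fun a _ => Real.rpow_mul_sub_min_le (hR a) hc hr
    _ = c ^ r * (M * c) := by rw [← hcr]; ring

theorem sum_min_sq_le_of_mul_rpow_eq {α : Type*} [Fintype α] {R : α → ℝ} (hR : 0 ≤ R)
    {M c r : ℝ} (hc : 0 < c) (hr0 : 0 ≤ r) (hr2 : r ≤ 2) (hcr : M * c ^ r = ∑ a, R a ^ r) :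
    ∑ a, min (R a) c ^ 2 ≤ M * c ^ 2 := by
  have hcr0 : 0 < c ^ r := Real.rpow_pos_of_pos hc r
  refine le_of_mul_le_mul_left ?_ hcr0
  calc c ^ r * ∑ a, min (R a) c ^ 2 ≤ c ^ 2 * ∑ a, R a ^ r := by
        rw [mul_sum, mul_sum]
        exact sum_le_sum fun a _ => Real.rpow_mul_min_sq_le (hR a) hc.le hr0 hr2
    _ = c ^ r * (M * c ^ 2) := by rw [← hcr]; ring

section Fourier

variable {F : Type*} [Field F] {ι κ : Type*} [Fintype ι] [DecidableEq ι] [Fintype κ]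

theorem dotProduct_vecMul_toMatrix' (h : (ι → F) →ₗ[F] (κ → F))
    (v : ι → F) (z : κ → F) : v ⬝ᵥ (z ᵥ* LinearMap.toMatrix' h) = z ⬝ᵥ h v := by
  rw [dotProduct_comm, ← dotProduct_mulVec, LinearMap.toMatrix'_mulVec]

theorem vecMul_toMatrix'_injective {h : (ι → F) →ₗ[F] (κ → F)} (hh : Function.Surjective h) :
    Function.Injective fun z : κ → F => z ᵥ* LinearMap.toMatrix' h := by
  intro z z' hzz'
  refine sub_eq_zero.mp (dotProduct_eq_zero _ fun u => ?_)
  obtain ⟨v, rfl⟩ := hh u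
  rw [sub_dotProduct, ← dotProduct_vecMul_toMatrix', ← dotProduct_vecMul_toMatrix']
  simp only at hzz'
  rw [hzz', sub_self]

variable [Fintype F] [DecidableEq κ]

theorem AddChar.sum_apply_dotProduct_eq_zero {ψ : AddChar F ℂ} (hψ : ψ.IsPrimitive)
    {u : κ → F} (hu : u ≠ 0) : ∑ z : κ → F, ψ (z ⬝ᵥ u) = 0 := by
  obtain ⟨i, hi⟩ := Function.ne_iff.mp hu
  obtain ⟨t, ht⟩ : ∃ t, ψ (u i * t) ≠ 1 := by
    simpa [DFunLike.ext_iff] using hψ hi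
  let χ : AddChar (κ → F) ℂ :=
    ψ.compAddMonoidHom (AddMonoidHom.mk' (· ⬝ᵥ u) fun a b => add_dotProduct a b u)
  refine AddChar.sum_eq_zero_of_ne_one (ψ := χ) fun h => ht ?_
  simpa [χ, mul_comm] using DFunLike.congr_fun h (Pi.single i t)

noncomputable def charTransform (ψ : AddChar F ℂ) (Q : (ι → F) → ℝ) (y : ι → F) : ℂ :=
  ∑ a, (Q a : ℂ) * ψ (a ⬝ᵥ y)

theorem charTransform_zero (ψ : AddChar F ℂ) (Q : (ι → F) → ℝ) :
    charTransform ψ Q 0 = ∑ a, Q a := by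
  simp [charTransform]

theorem norm_charTransform_sq (ψ : AddChar F ℂ) (Q : (ι → F) → ℝ) (y : ι → F) :
    (‖charTransform ψ Q y‖ ^ 2 : ℂ) =
      ∑ a, ∑ a', (Q a * Q a' : ℂ) * ψ ((a - a') ⬝ᵥ y) := by
  rw [← Complex.mul_conj', charTransform, map_sum, sum_mul_sum]
  refine sum_congr rfl fun a _ => sum_congr rfl fun a' _ => ?_
  rw [map_mul, Complex.conj_ofReal, ← AddChar.map_neg_eq_conj, sub_dotProduct, sub_eq_add_neg,
    AddChar.map_add_eq_mul]
  ring

theorem sum_norm_charTransform_vecMul_sq {ψ : AddChar F ℂ}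
    (hψ : ψ.IsPrimitive) (h : (ι → F) →ₗ[F] (κ → F)) (Q : (ι → F) → ℝ) :
    ∑ z : κ → F, ‖charTransform ψ Q (z ᵥ* LinearMap.toMatrix' h)‖ ^ 2 =
      Fintype.card (κ → F) * ∑ b, fiberSum h Q b ^ 2 := by
  classical
  have hz (a a' : ι → F) : ∑ z : κ → F, ψ ((a - a') ⬝ᵥ (z ᵥ* LinearMap.toMatrix' h)) =
      if h a = h a' then (Fintype.card (κ → F) : ℂ) else 0 := by
    simp only [dotProduct_vecMul_toMatrix', map_sub]
    split_ifs with haa'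
    · simp [haa']
    · exact AddChar.sum_apply_dotProduct_eq_zero hψ (sub_ne_zero.mpr haa')
  rw [sum_fiberSum_sq]
  apply Complex.ofReal_injective
  push_cast
  simp only [norm_charTransform_sq]
  rw [sum_comm, mul_sum]
  refine sum_congr rfl fun a _ => ?_
  rw [sum_comm, mul_sum]
  refine sum_congr rfl fun a' _ => ?_
  rw [← mul_sum, hz]
  split_ifs <;> push_cast <;> ring

theorem sum_norm_charTransform_sq {ψ : AddChar F ℂ} (hψ : ψ.IsPrimitive)
    (Q : (ι → F) → ℝ) :
    ∑ y, ‖charTransform ψ Q y‖ ^ 2 = Fintype.card (ι → F) * ∑ a, Q a ^ 2 := by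
  simpa [fiberSum_id] using sum_norm_charTransform_vecMul_sq hψ LinearMap.id Q

open Classical in
theorem card_mul_sum_sq_fiberSum_sub_le {ψ : AddChar F ℂ} (hψ : ψ.IsPrimitive)
    {f : (ι → F) →ₗ[F] (κ → F)} (hf : Function.Surjective f) (Q : (ι → F) → ℝ) :
    Fintype.card (κ → F) * ∑ b, (fiberSum f Q b - (∑ a, Q a) / Fintype.card (κ → F)) ^ 2 ≤
      ∑ y, if y ≠ 0 ∧ ∀ v, f v = 0 → v ⬝ᵥ y = 0 then ‖charTransform ψ Q y‖ ^ 2 else 0 := by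
  set M : ℝ := (Fintype.card (κ → F) : ℝ)
  set T := fun z : κ → F => z ᵥ* LinearMap.toMatrix' f
  have hM : M ≠ 0 := by positivity
  have hT : Function.Injective T := vecMul_toMatrix'_injective hf
  have hexpand : M * ∑ b, (fiberSum f Q b - (∑ a, Q a) / M) ^ 2 =
      M * ∑ b, fiberSum f Q b ^ 2 - (∑ a, Q a) ^ 2 := by
    simp only [sub_sq, sum_add_distrib, sum_sub_distrib, ← sum_mul, ← mul_sum, sum_fiberSum,
      sum_const, card_univ, nsmul_eq_mul]
    field_simp
    ring
  have hzero : ∑ z, ‖charTransform ψ Q (T z)‖ ^ 2 =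
      (∑ a, Q a) ^ 2 + ∑ z ∈ univ.erase 0, ‖charTransform ψ Q (T z)‖ ^ 2 := by
    rw [← add_sum_erase _ _ (mem_univ 0), show T 0 = 0 from zero_vecMul _, charTransform_zero,
      Complex.norm_real, Real.norm_eq_abs, sq_abs]
  have himage :
      (univ.erase 0).image T ⊆ univ.filter fun y => y ≠ 0 ∧ ∀ v, f v = 0 → v ⬝ᵥ y = 0 := by
    intro y hy
    obtain ⟨z, hz, rfl⟩ := mem_image.mp hy
    refine mem_filter.mpr ⟨mem_univ _, ?_, fun v hv => ?_⟩
    · exact (hT.ne_iff' (zero_vecMul _)).mpr (ne_of_mem_erase hz)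
    · simp [T, dotProduct_vecMul_toMatrix', hv]
  rw [hexpand, ← sum_norm_charTransform_vecMul_sq hψ, hzero, add_sub_cancel_left,
    ← sum_filter]
  calc ∑ z ∈ univ.erase 0, ‖charTransform ψ Q (T z)‖ ^ 2
      = ∑ y ∈ (univ.erase 0).image T, ‖charTransform ψ Q y‖ ^ 2 :=
        (sum_image (f := fun y => ‖charTransform ψ Q y‖ ^ 2) fun _ _ _ _ h => hT h).symm
    _ ≤ _ := sum_le_sum_of_subset_of_nonneg himage fun _ _ _ => sq_nonneg _

def IsAlmostDualUniversal {X : Type*} [Fintype X] (w : X → ℝ)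
    (f : X → (ι → F) →ₗ[F] (κ → F)) (ε : ℝ) : Prop :=
  ∀ y : ι → F, y ≠ 0 → prOf w (fun x => ∀ v, f x v = 0 → v ⬝ᵥ y = 0) ≤
    ε * Fintype.card (κ → F) / Fintype.card (ι → F)

open Classical in
theorem sum_mul_sum_sq_fiberSum_sub_le {X : Type*} [Fintype X] {w : X → ℝ}
    (hw0 : ∀ x, 0 ≤ w x) {f : X → (ι → F) →ₗ[F] (κ → F)} (hf : ∀ x, Function.Surjective (f x))
    {ε : ℝ} (hε : 0 ≤ ε) (hdu : IsAlmostDualUniversal w f ε) (Q : (ι → F) → ℝ) :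
    ∑ x, w x * ∑ b, (fiberSum (f x) Q b - (∑ a, Q a) / Fintype.card (κ → F)) ^ 2 ≤
      ε * ∑ a, Q a ^ 2 := by
  set ψ := AddChar.FiniteField.primitiveChar_to_Complex F
  have hψ := AddChar.FiniteField.primitiveChar_to_Complex_isPrimitive F
  set M : ℝ := (Fintype.card (κ → F) : ℝ)
  set N : ℝ := (Fintype.card (ι → F) : ℝ) with hN
  have hN0 : N ≠ 0 := by positivity
  have hprob (y : ι → F) :
      ∑ x, (if y ≠ 0 ∧ ∀ v, f x v = 0 → v ⬝ᵥ y = 0 then w x else 0) ≤ ε * M / N := by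
    by_cases hy : y = 0
    · simp only [hy, ne_eq, not_true_eq_false, false_and, if_false, sum_const_zero]
      positivity
    · refine le_of_eq_of_le (sum_congr rfl fun x _ => ?_) (hdu y hy)
      simp only [hy, ne_eq, not_false_eq_true, true_and]
      congr
  refine le_of_mul_le_mul_left ?_ (by positivity : 0 < M)
  calc M * ∑ x, w x * ∑ b, (fiberSum (f x) Q b - (∑ a, Q a) / M) ^ 2
      = ∑ x, w x * (M * ∑ b, (fiberSum (f x) Q b - (∑ a, Q a) / M) ^ 2) := by
        rw [mul_sum]; exact sum_congr rfl fun x _ => by ring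
    _ ≤ ∑ x, w x * ∑ y, if y ≠ 0 ∧ ∀ v, f x v = 0 → v ⬝ᵥ y = 0 then
          ‖charTransform ψ Q y‖ ^ 2 else 0 :=
        sum_le_sum fun x _ => mul_le_mul_of_nonneg_left
          (card_mul_sum_sq_fiberSum_sub_le hψ (hf x) Q) (hw0 x)
    _ = ∑ y, (∑ x, if y ≠ 0 ∧ ∀ v, f x v = 0 → v ⬝ᵥ y = 0 then w x else 0) *
          ‖charTransform ψ Q y‖ ^ 2 := by
        simp only [mul_sum, sum_mul, mul_ite, ite_mul, mul_zero, zero_mul]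
        exact sum_comm
    _ ≤ ∑ y, ε * M / N * ‖charTransform ψ Q y‖ ^ 2 :=
        sum_le_sum fun y _ => mul_le_mul_of_nonneg_right (hprob y) (sq_nonneg _)
    _ = M * (ε * ∑ a, Q a ^ 2) := by
        rw [← mul_sum, sum_norm_charTransform_sq hψ, ← hN]
        field_simp

theorem sum_mul_sum_abs_fiberSum_sub_le_of_le {X : Type*} [Fintype X] {w : X → ℝ}
    (hw0 : ∀ x, 0 ≤ w x) (hw1 : ∑ x, w x = 1) {f : X → (ι → F) →ₗ[F] (κ → F)}
    (hf : ∀ x, Function.Surjective (f x)) {ε : ℝ} (hε : 0 ≤ ε)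
    (hdu : IsAlmostDualUniversal w f ε) {R₁ R : (ι → F) → ℝ} (h : R₁ ≤ R) :
    ∑ x, w x * ∑ b, |fiberSum (f x) R b - (∑ a, R a) / Fintype.card (κ → F)| ≤
      √(Fintype.card (κ → F) * (ε * ∑ a, R₁ a ^ 2)) + 2 * ∑ a, (R a - R₁ a) := by
  set M : ℝ := (Fintype.card (κ → F) : ℝ)
  calc _ ≤ ∑ x, w x * (∑ b, |fiberSum (f x) R₁ b - (∑ a, R₁ a) / M| +
        2 * ∑ a, (R a - R₁ a)) :=
        sum_le_sum fun x _ => mul_le_mul_of_nonneg_left (sum_abs_fiberSum_sub_le h (f x)) (hw0 x)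
    _ = ∑ x, w x * ∑ b, |fiberSum (f x) R₁ b - (∑ a, R₁ a) / M| + 2 * ∑ a, (R a - R₁ a) := by
        simp only [mul_add, sum_add_distrib, ← sum_mul, hw1, one_mul]
    _ ≤ _ := by
        gcongr
        refine (sum_mul_sum_abs_le_sqrt hw0 hw1 _).trans ?_
        gcongr
        exact sum_mul_sum_sq_fiberSum_sub_le hw0 hf hε hdu R₁

theorem sum_mul_sum_abs_fiberSum_sub_le {X : Type*} [Fintype X] {w : X → ℝ}
    (hw0 : ∀ x, 0 ≤ w x) (hw1 : ∑ x, w x = 1) {f : X → (ι → F) →ₗ[F] (κ → F)}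
    (hf : ∀ x, Function.Surjective (f x)) {ε : ℝ} (hε : 0 ≤ ε)
    (hdu : IsAlmostDualUniversal w f ε) {s : ℝ} (hs0 : 0 < s) (hs1 : s ≤ 1 / 2)
    {R : (ι → F) → ℝ} (hR : 0 ≤ R) :
    ∑ x, w x * ∑ b, |fiberSum (f x) R b - (∑ a, R a) / Fintype.card (κ → F)| ≤
      (2 + √ε) * (Fintype.card (κ → F) : ℝ) ^ s * (∑ a, R a ^ (1 / (1 - s))) ^ (1 - s) := by
  set M : ℝ := (Fintype.card (κ → F) : ℝ)
  set r := 1 / (1 - s) with hr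
  set K := ∑ a, R a ^ r
  have hM : 0 < M := by positivity
  have hs : 0 < 1 - s := by linarith
  have hr1 : 1 ≤ r := by rw [hr, le_div_iff₀ hs]; linarith
  have hr2 : r ≤ 2 := by rw [hr, div_le_iff₀ hs]; linarith
  rcases (sum_nonneg fun a _ => Real.rpow_nonneg (hR a) r : 0 ≤ K).eq_or_lt with hK0 | hKpos
  · have hR0 : R = 0 := funext fun a =>
      (Real.rpow_eq_zero (hR a) (by linarith)).mp <|
        (sum_eq_zero_iff_of_nonneg fun a _ => Real.rpow_nonneg (hR a) r).mp hK0.symm a (mem_univ a)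
    simp only [hR0, fiberSum, Pi.zero_apply, ite_self, sum_const_zero, zero_div, sub_zero,
      abs_zero, mul_zero]
    positivity
  set c := (K / M) ^ (1 - s) with hc_def
  have hc : 0 < c := by positivity
  have hcr : M * c ^ r = K := by
    rw [← Real.rpow_mul (by positivity), hr, mul_one_div_cancel hs.ne', Real.rpow_one,
      mul_div_cancel₀ _ hM.ne']
  have hMc : M * c = M ^ s * K ^ (1 - s) := by
    rw [hc_def, Real.div_rpow hKpos.le hM.le, mul_div_left_comm,
      ← Real.rpow_one_sub' hM.le (by linarith), sub_sub_cancel, mul_comm]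
  calc _ ≤ √(M * (ε * ∑ a, min (R a) c ^ 2)) + 2 * ∑ a, (R a - min (R a) c) :=
        sum_mul_sum_abs_fiberSum_sub_le_of_le hw0 hw1 hf hε hdu fun a => min_le_left _ _
    _ ≤ √(ε * (M * c) ^ 2) + 2 * (M * c) := by
        gcongr ?_ + 2 * ?_
        · refine Real.sqrt_le_sqrt ?_
          rw [mul_left_comm, mul_pow, sq M, mul_assoc]
          gcongr
          exact sum_min_sq_le_of_mul_rpow_eq hR hc (by linarith) hr2 hcr
        · exact sum_sub_min_le_of_mul_rpow_eq hR hc hr1 hcr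
    _ = (2 + √ε) * M ^ s * K ^ (1 - s) := by
        rw [Real.sqrt_mul hε, Real.sqrt_sq (by positivity), hMc]
        ring

end Fourier

end DualUniversalHashing

theorem stmt_14_general {F : Type*} [Field F] [Fintype F] (n m : ℕ)
    {E : Type*} [Fintype E]
    (P : (Fin n → F) × E → ℝ) (hP0 : ∀ x, 0 ≤ P x)
    {X : Type*} [Fintype X] (w : X → ℝ)
    (hw0 : ∀ x, 0 ≤ w x) (hw1 : ∑ x, w x = 1)
    (f : X → ((Fin n → F) →ₗ[F] (Fin m → F))) (hfsurj : ∀ x, Function.Surjective (f x))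
    (ε : ℝ) (hε : 0 ≤ ε)
    (hdu : ∀ y : Fin n → F, y ≠ 0 →
      prOf w (fun x => ∀ v : Fin n → F, f x v = 0 → ∑ i, v i * y i = 0) ≤
        ε * (Fintype.card F : ℝ) ^ m / (Fintype.card F : ℝ) ^ n)
    (s : ℝ) (hs0 : 0 < s) (hs1 : s ≤ 1 / 2) :
    ∑ x, w x *
        ∑ b : Fin m → F, ∑ e : E,
          |push (f x) P b e - (∑ a, P (a, e)) / (Fintype.card F : ℝ) ^ m| ≤
      (2 + Real.sqrt ε) * ((Fintype.card F : ℝ) ^ m) ^ s *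
        ∑ e : E, (∑ a : Fin n → F, P (a, e) ^ (1 / (1 - s))) ^ (1 - s) := by
  have hcard (k : ℕ) : (Fintype.card (Fin k → F) : ℝ) = (Fintype.card F : ℝ) ^ k := by simp
  have hdu' : IsAlmostDualUniversal w f ε := by
    intro y hy
    rw [hcard, hcard]
    exact hdu y hy
  have he (e : E) := sum_mul_sum_abs_fiberSum_sub_le hw0 hw1 hfsurj hε hdu' hs0 hs1
    (R := fun a => P (a, e)) fun a => hP0 (a, e)
  simp only [hcard] at he
  calc _ = ∑ e, ∑ x, w x * ∑ b, |fiberSum (f x) (fun a => P (a, e)) b -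
        (∑ a, P (a, e)) / (Fintype.card F : ℝ) ^ m| := by
        simp only [Finset.mul_sum]
        conv_rhs => rw [Finset.sum_comm]
        exact Finset.sum_congr rfl fun x _ => Finset.sum_comm
    _ ≤ _ := by
        rw [Finset.mul_sum]
        exact Finset.sum_le_sum fun e _ => he e

theorem stmt_14 {F : Type*} [Field F] [Fintype F] (n m : ℕ) (hm : 1 ≤ m) (hnm : m ≤ n)
    {E : Type*} [Fintype E] [Nonempty E]
    (P : (Fin n → F) × E → ℝ) (hP0 : ∀ x, 0 ≤ P x) (hP1 : ∑ x, P x ≤ 1)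
    {X : Type*} [Fintype X] [Nonempty X] (w : X → ℝ)
    (hw0 : ∀ x, 0 ≤ w x) (hw1 : ∑ x, w x = 1)
    (f : X → ((Fin n → F) →ₗ[F] (Fin m → F))) (hfsurj : ∀ x, Function.Surjective (f x))
    (ε : ℝ) (hε : 0 ≤ ε)
    (hdu : ∀ y : Fin n → F, y ≠ 0 →
      prOf w (fun x => ∀ v : Fin n → F, f x v = 0 → ∑ i, v i * y i = 0) ≤
        ε * (Fintype.card F : ℝ) ^ m / (Fintype.card F : ℝ) ^ n)
    (s : ℝ) (hs0 : 0 < s) (hs1 : s ≤ 1 / 2) :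
    ∑ x, w x *
        ∑ b : Fin m → F, ∑ e : E,
          |push (f x) P b e - (∑ a, P (a, e)) / (Fintype.card F : ℝ) ^ m| ≤
      (2 + Real.sqrt ε) * ((Fintype.card F : ℝ) ^ m) ^ s *
        ∑ e : E, (∑ a : Fin n → F, P (a, e) ^ (1 / (1 - s))) ^ (1 - s) :=
  stmt_14_general n m P hP0 w hw0 hw1 f hfsurj ε hε hdu s hs0 hs1
end
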